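/- A point of T^5 = ℝ^5/ℤ^5 is fixed by some nonidentity element of the group Γ = ⟨α, β, γ⟩ ≅ (ℤ/2)³ if and only if it is fixed by one of α, β, γ; consequently the singular locus of the Γ-action is the disjoint union of the 48 fixed circles of α, β, and γ. -/
import Mathlib


abbrev T5 : Type := Fin 5 → AddCircle (1 : ℝ)

noncomputable def half : AddCircle (1 : ℝ) := ((1/2 : ℝ) : AddCircle (1 : ℝ))

noncomputable def alphaMap (x : T5) : T5 := ![x 0, -x 1, -x 2, half - x 3, -x 4]
noncomputable def betaMap (x : T5) : T5 := ![-x 0, half - x 1, -x 2, x 3, -x 4]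
noncomputable def gammaMap (x : T5) : T5 := ![-x 0, -x 1, half - x 2, -x 3, x 4]

lemma half_ne_zero : half ≠ 0 := by
  intro h
  rw [half, AddCircle.coe_eq_zero_iff] at h
  obtain ⟨n, hn⟩ := h
  have hn' : (n : ℝ) = 1/2 := by simpa using hn
  have h2 : ((2 * n : ℤ) : ℝ) = 1 := by push_cast; linarith
  have : (2 * n : ℤ) = 1 := by exact_mod_cast h2
  omega

/-- A point of `T⁵` is fixed by some nonidentity element of `Γ = ⟨α,β,γ⟩ ≅ (ℤ/2)³`
(whose nonidentity elements are `α, β, γ, αβ, βγ, αγ, αβγ`) if and only if it is fixed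
by one of `α, β, γ`; moreover the fixed point sets of `α`, `β`, `γ` are pairwise
disjoint, so the singular locus is the disjoint union of the 48 fixed circles. -/
theorem stmt6 :
    (∀ x : T5,
      (∃ g ∈ ({alphaMap, betaMap, gammaMap,
          alphaMap ∘ betaMap, betaMap ∘ gammaMap, alphaMap ∘ gammaMap,
          alphaMap ∘ betaMap ∘ gammaMap} : Set (T5 → T5)), g x = x) ↔
        (alphaMap x = x ∨ betaMap x = x ∨ gammaMap x = x)) ∧
    Disjoint {x : T5 | alphaMap x = x} {x : T5 | betaMap x = x} ∧
    Disjoint {x : T5 | betaMap x = x} {x : T5 | gammaMap x = x} ∧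
    Disjoint {x : T5 | alphaMap x = x} {x : T5 | gammaMap x = x} := by
  refine ⟨?_, ?_, ?_, ?_⟩
  · intro x
    constructor
    · rintro ⟨g, hg, hfix⟩
      simp only [Set.mem_insert_iff, Set.mem_singleton_iff] at hg
      rcases hg with h|h|h|h|h|h|h
      · exact Or.inl (h ▸ hfix)
      · exact Or.inr (Or.inl (h ▸ hfix))
      · exact Or.inr (Or.inr (h ▸ hfix))
      · -- αβ: coord 1 : -(half - x 1) = x 1 and coord 0 gives... use coord 1
        subst h
        exfalso
        have h1 := congrFun hfix 1
        simp [alphaMap, betaMap] at h1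
        -- h1 : -(half - x 1) = x 1
        exact half_ne_zero h1
      · subst h
        exfalso
        have h1 := congrFun hfix 1
        simp [betaMap, gammaMap] at h1
        exact half_ne_zero h1
      · subst h
        exfalso
        have h1 := congrFun hfix 2
        simp [alphaMap, gammaMap] at h1
        exact half_ne_zero h1
      · subst h
        exfalso
        have h1 := congrFun hfix 3
        simp [alphaMap, betaMap, gammaMap] at h1
        exact half_ne_zero h1
    · rintro (h|h|h)
      · exact ⟨alphaMap, by simp, h⟩
      · exact ⟨betaMap, by simp, h⟩
      · exact ⟨gammaMap, by simp, h⟩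
  · rw [Set.disjoint_left]
    intro x ha hb
    have h1 := congrFun ha 1
    have h2 := congrFun hb 1
    simp [alphaMap, betaMap] at h1 h2
    exact half_ne_zero (by rw [sub_eq_iff_eq_add] at h2; rw [h2]; nth_rewrite 1 [← h1]; simp)
  · rw [Set.disjoint_left]
    intro x ha hb
    have h1 := congrFun ha 2
    have h2 := congrFun hb 2
    simp [betaMap, gammaMap] at h1 h2
    exact half_ne_zero (by rw [sub_eq_iff_eq_add] at h2; rw [h2]; nth_rewrite 1 [← h1]; simp)
  · rw [Set.disjoint_left]
    intro x ha hb
    have h1 := congrFun ha 2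
    have h2 := congrFun hb 2
    simp [alphaMap, gammaMap] at h1 h2
    exact half_ne_zero (by rw [sub_eq_iff_eq_add] at h2; rw [h2]; nth_rewrite 1 [← h1]; simp)
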